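/- The probability generating function of the sum of independent Bernoulli random variables b_n with success probability r/(n-1+r), n = 1,...,m, equals (Γ(r)/Γ(m+r)) Σ_{k=0}^{m} |s(m,k)| (rz)^k. -/

import Mathlib

/-!
Each factor of the product is `(r z + n) / (r + n)`, so the product is the ratio of rising
factorials `(r z)^(m) / r^(m)`. The numerator expands in the unsigned Stirling numbers of the first
kind, being the generating polynomial `x (x + 1) ⋯ (x + m - 1)` of these numbers evaluated at
`r z`, and the denominator is `Γ(m + r) / Γ(r)` by the functional equation of `Γ`.
-/

/-- Unsigned Stirling numbers of the first kind. -/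
def stirling1 : ℕ → ℕ → ℕ
  | 0, 0 => 1
  | 0, _ + 1 => 0
  | _ + 1, 0 => 0
  | m + 1, j + 1 => stirling1 m j + m * stirling1 m (j + 1)

open Polynomial Finset

theorem stirling1_eq_stirlingFirst : ∀ m k : ℕ, stirling1 m k = Nat.stirlingFirst m k
  | 0, 0 | 0, _ + 1 | _ + 1, 0 => rfl
  | m + 1, k + 1 => by
    rw [stirling1, Nat.stirlingFirst_succ_succ, stirling1_eq_stirlingFirst m k,
      stirling1_eq_stirlingFirst m (k + 1), add_comm]

theorem ascPochhammer_nat_coeff_eq_stirlingFirst (m k : ℕ) :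
    (ascPochhammer ℕ m).coeff k = Nat.stirlingFirst m k := by
  induction m generalizing k with
  | zero => cases k <;> simp [coeff_one]
  | succ m ih =>
    cases k with
    | zero => simp [coeff_zero_eq_eval_zero]
    | succ k =>
      rw [ascPochhammer_succ_right, mul_add, coeff_add, coeff_mul_X, coeff_mul_natCast, ih, ih,
        Nat.stirlingFirst_succ_succ, Nat.cast_id, add_comm, mul_comm]

theorem ascPochhammer_eval_eq_sum_stirlingFirst {R : Type*} [CommSemiring R] (m : ℕ) (x : R) :
    (ascPochhammer R m).eval x = ∑ k ∈ range (m + 1), (Nat.stirlingFirst m k : R) * x ^ k := by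
  rw [← ascPochhammer_map (Nat.castRingHom R), eval_map, eval₂_eq_sum_range,
    ascPochhammer_natDegree]
  simp [ascPochhammer_nat_coeff_eq_stirlingFirst]

theorem ascPochhammer_eval_eq_prod_range {R : Type*} [CommSemiring R] (m : ℕ) (x : R) :
    (ascPochhammer R m).eval x = ∏ n ∈ range m, (x + n) := by
  induction m with
  | zero => simp
  | succ m ih => simp [ascPochhammer_succ_right, ih, prod_range_succ]

theorem Real.Gamma_add_nat_eq_mul_ascPochhammer {r : ℝ} (hr : ∀ n : ℕ, r ≠ -n) (m : ℕ) :
    Real.Gamma (r + m) = Real.Gamma r * (ascPochhammer ℝ m).eval r := by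
  induction m with
  | zero => simp
  | succ m ih =>
    have hrm : r + m ≠ 0 := fun h => hr m (eq_neg_of_add_eq_zero_left h)
    rw [Nat.cast_succ, ← add_assoc, Real.Gamma_add_one hrm, ih, ascPochhammer_succ_right,
      eval_mul]
    simp only [eval_add, eval_X, eval_natCast]
    ring

/-- The PGF of the sum of independent Bernoulli(r/(n-1+r)) random variables,
n = 1,…,m, equals (Γ(r)/Γ(m+r)) Σ_{k=0}^m |s(m,k)| (rz)^k. -/
theorem bernoulli_sum_pgf (r : ℝ) (hr : 0 < r) (m : ℕ) (z : ℝ) :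
    (∏ n ∈ Finset.range m, ((n : ℝ) / (n + r) + r / (n + r) * z))
      = Real.Gamma r / Real.Gamma (m + r) *
          ∑ k ∈ Finset.range (m + 1), (stirling1 m k : ℝ) * (r * z) ^ k := by
  have hr' : ∀ n : ℕ, r ≠ -n := fun n h => by linarith [(n.cast_nonneg : (0 : ℝ) ≤ n)]
  have hfactor : ∀ n ∈ range m,
      (n : ℝ) / (n + r) + r / (n + r) * z = (r * z + n) / (r + n) :=
    fun n _ => by ring
  simp_rw [stirling1_eq_stirlingFirst, ← ascPochhammer_eval_eq_sum_stirlingFirst]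
  rw [prod_congr rfl hfactor, prod_div_distrib, ← ascPochhammer_eval_eq_prod_range,
    ← ascPochhammer_eval_eq_prod_range, add_comm (m : ℝ),
    Real.Gamma_add_nat_eq_mul_ascPochhammer hr']
  have hG : Real.Gamma r ≠ 0 := Real.Gamma_ne_zero hr'
  have hP : (ascPochhammer ℝ m).eval r ≠ 0 := (ascPochhammer_pos m r hr).ne'
  field_simp
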